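/- arXiv:math/0608190 — 3 statements merged into one kernel-verified Lean document; each statement's English description precedes it below -/
import Mathlib

section
/- Let G be a group and H a finitely generated, subgroup separable, normal subgroup of G such that for every finite-index characteristic subgroup H' of H the quotient G/H' is subgroup separable. Then every finitely generated subgroup M of G with M ∩ H closed in the profinite topology of H is itself closed in the profinite topology of G. -/
/-- A subgroup `K` is closed in the profinite topology of `G`: every element outside `K`
is separated from the coset `K·N` of some finite-index normal subgroup `N`. -/
def ProfClosed {G : Type*} [Group G] (K : Subgroup G) : Prop :=
  ∀ g : G, g ∉ K → ∃ N : Subgroup G, N.Normal ∧ N.FiniteIndex ∧ ∀ k ∈ K, ∀ n ∈ N, g ≠ k * n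

/-- `G` is subgroup separable (LERF). -/
def SubgroupSeparable (G : Type*) [Group G] : Prop :=
  ∀ H : Subgroup G, H.FG → ∀ g ∉ H, ∃ K : Subgroup G, K.FiniteIndex ∧ H ≤ K ∧ g ∉ K

/-- `G` is residually finite. -/
def ResiduallyFinite (G : Type*) [Group G] : Prop :=
  ∀ g : G, g ≠ 1 → ∃ N : Subgroup G, N.Normal ∧ N.FiniteIndex ∧ g ∉ N

/-- `G` is polycyclic: it has a subnormal series with cyclic quotients. -/
def IsPolycyclic (G : Type*) [Group G] : Prop :=
  ∃ (n : ℕ) (s : Fin (n + 1) → Subgroup G),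
    s 0 = ⊥ ∧ s (Fin.last n) = ⊤ ∧
    ∀ i : Fin n, s i.castSucc ≤ s i.succ ∧
      (∀ x ∈ s i.succ, ∀ y ∈ s i.castSucc, x * y * x⁻¹ ∈ s i.castSucc) ∧
      ∃ g ∈ s i.succ, ∀ x ∈ s i.succ, ∃ k : ℤ, x * (g ^ k)⁻¹ ∈ s i.castSucc

open scoped commutatorElement in
/-- Relators of the right-angled Artin group of a graph `X`. -/
def raagRels {V : Type*} (X : SimpleGraph V) : Set (FreeGroup V) :=
  {r | ∃ u v : V, X.Adj u v ∧ r = ⁅FreeGroup.of u, FreeGroup.of v⁆}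

/-- The right-angled Artin group of a graph `X`. -/
def RAAG {V : Type*} (X : SimpleGraph V) := PresentedGroup (raagRels X)

instance {V : Type*} (X : SimpleGraph V) : Group (RAAG X) := by unfold RAAG; infer_instance


lemma finite_monoidHom {H P : Type*} [Group H] [Group P] [Group.FG H] [Finite P] :
    Finite (H →* P) := by
  obtain ⟨S, hS, hSfin⟩ := Group.fg_iff.mp ‹Group.FG H›
  haveI := hSfin.to_subtype
  refine Finite.of_injective (fun f : H →* P => (fun s : S => f s)) ?_
  intro f g h
  exact MonoidHom.eq_of_eqOn_dense hS fun x hx => congrFun h ⟨x, hx⟩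

/-- The "characteristic core" of a subgroup. -/
def charCore {H : Type*} [Group H] (N : Subgroup H) : Subgroup H :=
  ⨅ f : H →* Equiv.Perm (H ⧸ N), f.ker

lemma charCore_le {H : Type*} [Group H] (N : Subgroup H) : charCore N ≤ N :=
  le_trans (iInf_le _ (MulAction.toPermHom H (H ⧸ N)))
    (by rw [← Subgroup.normalCore_eq_ker]; exact N.normalCore_le)

instance charCore_characteristic {H : Type*} [Group H] (N : Subgroup H) :
    (charCore N).Characteristic := by
  rw [Subgroup.characteristic_iff_le_comap]
  intro φ x hx
  rw [Subgroup.mem_comap, charCore, Subgroup.mem_iInf]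
  intro f
  exact Subgroup.mem_iInf.mp hx (f.comp φ.toMonoidHom)

lemma charCore_finiteIndex {H : Type*} [Group H] (N : Subgroup H) [Group.FG H]
    [N.FiniteIndex] : (charCore N).FiniteIndex := by
  haveI : Finite (H →* Equiv.Perm (H ⧸ N)) := finite_monoidHom
  exact Subgroup.finiteIndex_iInf fun f => inferInstance

lemma key_lemma {G : Type*} [Group G] (M : Subgroup G) (hM : M.FG) (H'' : Subgroup G)
    [H''.Normal] (hq : SubgroupSeparable (G ⧸ H'')) {g : G} (hg : g ∉ M ⊔ H'') :
    ∃ N : Subgroup G, N.Normal ∧ N.FiniteIndex ∧ ∀ k ∈ M, ∀ n ∈ N, g ≠ k * n := by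
  set π := QuotientGroup.mk' H'' with hπ
  have hMbar : (M.map π).FG := by
    obtain ⟨S, hS⟩ := hM
    classical
    exact ⟨S.image π, by rw [Finset.coe_image, ← MonoidHom.map_closure, hS]⟩
  have hgbar : π g ∉ M.map π := by
    rintro ⟨m, hm, heq⟩
    apply hg
    have h2 : m⁻¹ * g ∈ H'' := by
      rwa [← QuotientGroup.eq, ← QuotientGroup.mk'_apply, ← QuotientGroup.mk'_apply]
    have : g = m * (m⁻¹ * g) := by group
    rw [this]
    exact mul_mem (le_sup_left (α := Subgroup G) (a := M) (b := H'') hm) (le_sup_right (α := Subgroup G) (a := M) (b := H'') h2)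
  obtain ⟨Kbar, hKfi, hMK, hgK⟩ := hq (M.map π) hMbar (π g) hgbar
  set K := Kbar.comap π with hK
  haveI : K.FiniteIndex :=
    ⟨by rw [hK, Subgroup.index_comap_of_surjective _ (QuotientGroup.mk'_surjective H'')]
        exact hKfi.index_ne_zero⟩
  have hMleK : M ≤ K := fun m hm => hMK ⟨m, hm, rfl⟩
  have hgnotK : g ∉ K := hgK
  refine ⟨K.normalCore, inferInstance, inferInstance, ?_⟩
  rintro k hk n hn rfl
  exact hgnotK (mul_mem (hMleK hk) (K.normalCore_le hn))

/-- If `H` is a finitely generated subgroup separable normal subgroup of `G`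
with `G/H'` subgroup separable for every finite-index characteristic subgroup `H'` of `H`,
then a finitely generated subgroup `M` of `G` is closed in the profinite topology of `G`
whenever `M ∩ H` is closed in the profinite topology of `H`. -/
theorem stmt9 {G : Type*} [Group G] (H : Subgroup G) [H.Normal] (hfg : H.FG)
    (hsep : SubgroupSeparable H)
    (hquot : ∀ H' : Subgroup H, H'.Characteristic → H'.FiniteIndex →
      ∀ [(H'.map H.subtype).Normal], SubgroupSeparable (G ⧸ H'.map H.subtype))
    (M : Subgroup G) (hM : M.FG) (hMH : ProfClosed (M.subgroupOf H)) :
    ProfClosed M := by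
  intro g hg
  by_cases hg2 : g ∈ M ⊔ H
  · rw [← SetLike.mem_coe, Subgroup.mul_normal] at hg2
    obtain ⟨m, hm, h, hH, rfl⟩ := hg2
    have hhsub : (⟨h, hH⟩ : H) ∉ M.subgroupOf H := by
      rw [Subgroup.mem_subgroupOf]
      exact fun hh => hg (mul_mem hm hh)
    obtain ⟨N₁, hN₁n, hN₁fi, hsepN₁⟩ := hMH ⟨h, hH⟩ hhsub
    haveI : Group.FG H := (Group.fg_iff_subgroup_fg H).mpr hfg
    haveI := hN₁fi
    haveI : (charCore N₁).FiniteIndex := charCore_finiteIndex N₁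
    have hq := hquot (charCore N₁) inferInstance inferInstance
    apply key_lemma M hM _ hq
    intro hmem
    rw [← SetLike.mem_coe, Subgroup.mul_normal] at hmem
    obtain ⟨m', hm', n, hn, heq⟩ := hmem
    obtain ⟨nh, hnh, rfl⟩ := hn
    have heq' : m' * ↑nh = m * h := heq
    have hh2 : h = m⁻¹ * m' * ↑nh := by
      rw [mul_assoc, heq']
      group
    have hk : m⁻¹ * m' ∈ H := by
      have h3 : m⁻¹ * m' = h * (↑nh)⁻¹ := by rw [hh2]; group
      rw [h3]
      exact mul_mem hH (inv_mem nh.2)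
    refine hsepN₁ ⟨m⁻¹ * m', hk⟩ ?_ nh (charCore_le N₁ hnh) ?_
    · rw [Subgroup.mem_subgroupOf]
      exact mul_mem (inv_mem hm) hm'
    · exact Subtype.ext hh2
  · have heq : (⊤ : Subgroup H).map H.subtype = H := by
      rw [← MonoidHom.range_eq_map, Subgroup.range_subtype]
    haveI : ((⊤ : Subgroup H).map H.subtype).Normal := by rw [heq]; infer_instance
    have hq := hquot ⊤ inferInstance inferInstance
    refine key_lemma M hM _ hq ?_
    rw [heq]
    exact hg2
end

section
/- Let C = A × B be a direct product of two subgroup separable groups A and B (identifying A with A × {1} and B with {1} × B). A finitely generated subgroup M of C is closed in the profinite topology of C if and only if M ∩ A is closed in the profinite topology of A. -/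
lemma fg_map' {G G' : Type*} [Group G] [Group G'] (f : G →* G') {H : Subgroup G}
    (h : H.FG) : (H.map f).FG := by
  rw [Subgroup.fg_iff] at h ⊢
  obtain ⟨S, hS, hfin⟩ := h
  exact ⟨f '' S, by rw [← hS, MonoidHom.map_closure], hfin.image f⟩

/-- Key lemma: if `Q` is finite and `B` is LERF, then any f.g. subgroup of `Q × B`
can be separated from an outside point by a finite-index normal subgroup. -/
lemma finLemma {Q B : Type*} [Group Q] [Group B] [Finite Q] (hB : SubgroupSeparable B)
    (H : Subgroup (Q × B)) (hH : H.FG) (g : Q × B) (hg : g ∉ H) :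
    ∃ N : Subgroup (Q × B), N.Normal ∧ N.FiniteIndex ∧ ∀ k ∈ H, ∀ n ∈ N, g ≠ k * n := by
  by_cases hc : ∃ h₀ ∈ H, (h₀ : Q × B).1 = g.1
  · obtain ⟨h₀, h₀H, h₀eq⟩ := hc
    -- the fiber subgroup D = {x : B | (1, x) ∈ H} is finitely generated
    haveI : Group.FG H := (Group.fg_iff_subgroup_fg H).mpr hH
    set K : Subgroup H := ((MonoidHom.fst Q B).comp H.subtype).ker with hK
    haveI : K.FiniteIndex := by
      constructor
      rw [hK, Subgroup.index_ker]
      have : Nonempty (((MonoidHom.fst Q B).comp H.subtype).range) := One.instNonempty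
      exact Nat.card_ne_zero.mpr ⟨this, Subtype.finite⟩
    haveI : Group.FG K := Subgroup.fg_of_index_ne_zero K
    set D : Subgroup B := K.map ((MonoidHom.snd Q B).comp H.subtype) with hD
    have hDfg : D.FG := fg_map' _ ((Group.fg_iff_subgroup_fg K).mp inferInstance)
    have hDmem : ∀ x : B, x ∈ D ↔ (1, x) ∈ H := by
      intro x
      constructor
      · rintro ⟨⟨y, hyH⟩, hyK, rfl⟩
        have h1 : y.1 = 1 := hyK
        have : y = (1, y.2) := by ext <;> simp [h1]
        simpa [← this] using hyH
      · intro hx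
        exact ⟨⟨(1, x), hx⟩, by simp [hK, MonoidHom.mem_ker], rfl⟩
    -- separate g.2 * h₀.2⁻¹ from D in B
    have hgD : g.2 * (h₀ : Q × B).2⁻¹ ∉ D := by
      rw [hDmem]
      intro hmem
      apply hg
      have : (1, g.2 * (h₀ : Q × B).2⁻¹) * h₀ = g := by
        ext
        · simp [h₀eq]
        · simp
      rw [← this]
      exact H.mul_mem hmem h₀H
    obtain ⟨Kb, KbFI, hDKb, hgKb⟩ := hB D hDfg _ hgD
    refine ⟨(⊥ : Subgroup Q).prod Kb.normalCore, inferInstance, ?_, ?_⟩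
    · constructor
      rw [Subgroup.index_prod, Subgroup.index_bot]
      exact Nat.mul_ne_zero (Nat.card_ne_zero.mpr ⟨One.instNonempty, inferInstance⟩)
        Subgroup.FiniteIndex.index_ne_zero
    · rintro k hk n hn rfl
      obtain ⟨hn1, hn2⟩ := Subgroup.mem_prod.mp hn
      have hn1' : n.1 = 1 := hn1
      have hk1 : k.1 = (h₀ : Q × B).1 := by
        rw [h₀eq]
        show k.1 = k.1 * n.1
        rw [hn1', mul_one]
      have hkh : k.2 * (h₀ : Q × B).2⁻¹ ∈ D := by
        rw [hDmem]
        have : (k.1, k.2) * ((h₀ : Q × B).1, (h₀ : Q × B).2)⁻¹ = (1, k.2 * (h₀ : Q × B).2⁻¹) := by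
          ext
          · simp [hk1]
          · simp
        have hm := H.mul_mem hk (H.inv_mem h₀H)
        simpa [← this] using hm
      apply hgKb
      have key : (k * n).2 * (h₀ : Q × B).2⁻¹
          = (k.2 * (h₀ : Q × B).2⁻¹) * ((h₀ : Q × B).2 * n.2 * (h₀ : Q × B).2⁻¹) := by
        show k.2 * n.2 * (h₀ : Q × B).2⁻¹ = _
        group
      rw [key]
      exact Kb.mul_mem (hDKb hkh)
        (Subgroup.normalCore_le Kb
          (Subgroup.normalCore_normal Kb |>.conj_mem n.2 hn2 (h₀ : Q × B).2))
  · refine ⟨(⊥ : Subgroup Q).prod ⊤, inferInstance, ?_, ?_⟩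
    · constructor
      rw [Subgroup.index_prod, Subgroup.index_bot, Subgroup.index_top]
      exact Nat.mul_ne_zero (Nat.card_ne_zero.mpr ⟨One.instNonempty, inferInstance⟩) one_ne_zero
    · rintro k hk n hn rfl
      obtain ⟨hn1, -⟩ := Subgroup.mem_prod.mp hn
      exact hc ⟨k, hk, by rw [show (k * n).1 = k.1 * n.1 from rfl, show n.1 = 1 from hn1, mul_one]⟩

/-- For `C = A × B` with `A`, `B` subgroup separable, a finitely generated
subgroup `M` of `C` is closed in the profinite topology of `C` iff `M ∩ A` is closed in
the profinite topology of `A`. -/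
theorem stmt10 {A B : Type*} [Group A] [Group B]
    (hA : SubgroupSeparable A) (hB : SubgroupSeparable B)
    (M : Subgroup (A × B)) (hM : M.FG) :
    ProfClosed M ↔ ProfClosed (M.comap (MonoidHom.inl A B)) := by
  constructor
  · -- easy direction
    intro hcl a ha
    obtain ⟨N, Nn, NFI, hN⟩ := hcl (a, 1) ha
    haveI := Nn
    refine ⟨N.comap (MonoidHom.inl A B), Nn.comap _, ?_, ?_⟩
    · constructor
      intro h0
      rw [Subgroup.index_comap] at h0
      exact NFI.index_ne_zero (zero_dvd_iff.mp (h0 ▸ Subgroup.relIndex_dvd_index_of_normal N _))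
    · rintro k hk n hn rfl
      exact hN (k, 1) hk (n, 1) hn (by ext <;> simp)
  · -- hard direction
    intro hcl
    rintro ⟨a, b⟩ hab
    by_cases hb : b ∈ M.map (MonoidHom.snd A B)
    · -- b is in the projection of M to B
      obtain ⟨m0, m0M, hm0⟩ := hb
      set a₀ : A := m0.1 with ha₀
      have hm0' : m0 = (a₀, b) := by
        ext
        · rfl
        · exact hm0
      have haa : a * a₀⁻¹ ∉ M.comap (MonoidHom.inl A B) := by
        intro hmem
        apply hab
        have : ((a * a₀⁻¹, 1) : A × B) * (a₀, b) = (a, b) := by ext <;> simp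
        rw [← this]
        exact M.mul_mem hmem (hm0' ▸ m0M)
      obtain ⟨NA, NAn, NAFI, hNA⟩ := hcl _ haa
      haveI := NAn
      haveI := NAFI
      set f : A × B →* (A ⧸ NA) × B :=
        (QuotientGroup.mk' NA).prodMap (MonoidHom.id B) with hf
      have hfsurj : Function.Surjective f :=
        Function.Surjective.prodMap (QuotientGroup.mk'_surjective NA) Function.surjective_id
      have hMbar : (M.map f).FG := fg_map' f hM
      have hgbar : f (a, b) ∉ M.map f := by
        rintro ⟨m, hmM, hm⟩
        have h2 : m.2 = b := congrArg Prod.snd hm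
        have h1 : QuotientGroup.mk' NA m.1 = QuotientGroup.mk' NA a := congrArg Prod.fst hm
        obtain ⟨z, hz, hz2⟩ := ((QuotientGroup.mk'_eq_mk' (N := NA)).mp h1)
        have hk : m.1 * a₀⁻¹ ∈ M.comap (MonoidHom.inl A B) := by
          have : (m.1, m.2) * ((a₀, b) : A × B)⁻¹ = (m.1 * a₀⁻¹, 1) := by
            ext
            · simp
            · simp [h2]
          have hm' := M.mul_mem hmM (M.inv_mem (hm0' ▸ m0M))
          rw [this] at hm'
          exact hm'
        refine hNA _ hk (a₀ * z * a₀⁻¹) (NAn.conj_mem z hz a₀) ?_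
        rw [← hz2]
        group
      obtain ⟨Nbar, Nbarn, NbarFI, hNbar⟩ := finLemma hB (M.map f) hMbar _ hgbar
      refine ⟨Nbar.comap f, Nbarn.comap f, ?_, ?_⟩
      · constructor
        rw [Subgroup.index_comap_of_surjective _ hfsurj]
        exact NbarFI.index_ne_zero
      · rintro k hk n hn heq
        exact hNbar (f k) ⟨k, hk, rfl⟩ (f n) hn (by rw [heq, map_mul])
    · -- b is not in the projection of M to B
      have hMB : (M.map (MonoidHom.snd A B)).FG := fg_map' _ hM
      obtain ⟨Kb, KbFI, hMBKb, hbKb⟩ := hB _ hMB b hb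
      refine ⟨(⊤ : Subgroup A).prod Kb.normalCore, inferInstance, ?_, ?_⟩
      · constructor
        rw [Subgroup.index_prod, Subgroup.index_top, one_mul]
        exact Subgroup.FiniteIndex.index_ne_zero
      · rintro k hk n hn heq
        obtain ⟨-, hn2⟩ := Subgroup.mem_prod.mp hn
        apply hbKb
        have : b = k.2 * n.2 := congrArg Prod.snd heq
        rw [this]
        exact Kb.mul_mem (hMBKb ⟨k, hk, rfl⟩) (Subgroup.normalCore_le Kb hn2)
end

section
/- If A and B are subgroup separable groups, M is a finitely generated subgroup of A × B, and the projection of M to B is injective on M ∩ (A × {1}) being trivial (i.e., M ∩ (A × {1}) = 1), then M is closed in the profinite topology of A × B. -/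
lemma myFGmap {G H : Type*} [Group G] [Group H] {K : Subgroup G} (h : K.FG) (f : G →* H) :
    (K.map f).FG := by
  classical
  obtain ⟨S, hS⟩ := h
  exact ⟨S.image f, by rw [Finset.coe_image, ← MonoidHom.map_closure, hS]⟩

lemma myFGbot {G : Type*} [Group G] : (⊥ : Subgroup G).FG :=
  ⟨∅, by simp⟩

/-- Key separation lemma in `Q × B` with `Q` finite. -/
lemma sepLemma {Q B : Type*} [Group Q] [Finite Q] [Group B] (hB : SubgroupSeparable B)
    (L : Subgroup (Q × B)) (hL : L.FG)
    (htriv : ∀ x : Q, (x, (1 : B)) ∈ L → x = 1) :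
    ∃ K : Subgroup B, K.FiniteIndex ∧ ∀ x b, (x, b) ∈ L → b ∈ K → x = 1 := by
  -- the subgroup T' = {b : (1,b) ∈ L}
  set L' : Subgroup (Q × B) := L ⊓ (⊥ : Subgroup Q).prod ⊤ with hL'
  have hL'le : L' ≤ L := inf_le_left
  have hT'fg : (L'.map (MonoidHom.snd Q B)).FG := by
    haveI : Group.FG L := (Group.fg_iff_subgroup_fg L).mpr hL
    haveI : ((⊥ : Subgroup Q).prod (⊤ : Subgroup B)).FiniteIndex := by
      constructor
      rw [Subgroup.index_prod]
      simp [Subgroup.index_bot, Subgroup.index_top]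
      exact Nat.card_pos.ne'
    haveI : (L'.subgroupOf L).FiniteIndex := by
      rw [hL', Subgroup.inf_subgroupOf_left]
      infer_instance
    haveI : Group.FG (L'.subgroupOf L) := Subgroup.fg_of_index_ne_zero _
    haveI : Group.FG L' :=
      Group.fg_of_surjective (f := (Subgroup.subgroupOfEquivOfLe hL'le).toMonoidHom)
        (Subgroup.subgroupOfEquivOfLe hL'le).surjective
    exact myFGmap ((Group.fg_iff_subgroup_fg L').mp this) _
  set T' := L'.map (MonoidHom.snd Q B) with hT'
  have hmemT' : ∀ b : B, b ∈ T' ↔ ((1 : Q), b) ∈ L := by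
    intro b
    constructor
    · rintro ⟨⟨x, c⟩, hx, rfl⟩
      rw [SetLike.mem_coe, hL', Subgroup.mem_inf, Subgroup.mem_prod, Subgroup.mem_bot] at hx
      obtain ⟨hx1, hxb, -⟩ := hx
      subst hxb
      exact hx1
    · intro h
      refine ⟨((1 : Q), b), ?_, rfl⟩
      rw [SetLike.mem_coe, hL', Subgroup.mem_inf, Subgroup.mem_prod, Subgroup.mem_bot]
      exact ⟨h, rfl, trivial⟩
  have key : ∀ x : Q, ∃ Kx : Subgroup B, Kx.FiniteIndex ∧
      ∀ b, (x, b) ∈ L → b ∈ Kx → x = 1 := by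
    intro x
    by_cases hx1 : x = 1
    · exact ⟨⊤, inferInstance, fun _ _ _ => hx1⟩
    by_cases hex : ∃ b0, (x, b0) ∈ L
    · obtain ⟨b0, hb0⟩ := hex
      have hb0T : b0 ∉ T' := by
        intro hmem
        rw [hmemT'] at hmem
        have : (x, (1 : B)) ∈ L := by
          have := mul_mem hb0 (inv_mem hmem)
          simpa using this
        exact hx1 (htriv x this)
      obtain ⟨Kx, hKfi, hTK, hb0K⟩ := hB T' hT'fg b0 hb0T
      refine ⟨Kx, hKfi, fun b hb hbK => absurd ?_ hb0K⟩
      have : b0⁻¹ * b ∈ T' := by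
        rw [hmemT']
        have := mul_mem (inv_mem hb0) hb
        simpa using this
      have h1 : b0⁻¹ * b ∈ Kx := hTK this
      have : b0 = b * (b0⁻¹ * b)⁻¹ := by group
      rw [this]
      exact mul_mem hbK (inv_mem h1)
    · push_neg at hex
      exact ⟨⊤, inferInstance, fun b hb _ => absurd hb (hex b)⟩
  choose f hf using key
  haveI : ∀ x, (f x).FiniteIndex := fun x => (hf x).1
  refine ⟨⨅ x, f x, Subgroup.finiteIndex_iInf (fun x => (hf x).1), fun x b hxb hbK => ?_⟩
  exact (hf x).2 b hxb (Subgroup.mem_iInf.mp hbK x)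

/-- If `A`, `B` are subgroup separable and `M` is a finitely generated
subgroup of `A × B` with `M ∩ (A × {1})` trivial, then `M` is closed in the profinite
topology of `A × B`. -/
theorem stmt18 {A B : Type*} [Group A] [Group B]
    (hA : SubgroupSeparable A) (hB : SubgroupSeparable B)
    (M : Subgroup (A × B)) (hM : M.FG)
    (htriv : M.comap (MonoidHom.inl A B) = ⊥) :
    ProfClosed M := by
  rintro ⟨a, b⟩ hg
  set P := M.map (MonoidHom.snd A B) with hP
  by_cases hb : b ∈ P
  · -- b is in the projection of M
    obtain ⟨m, hmM, hmb⟩ := hb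
    set a' := a * m.1⁻¹ with ha'def
    have ha' : a' ≠ 1 := by
      intro h
      apply hg
      have ha : a = m.1 := by
        have := mul_eq_one_iff_eq_inv.mp h
        simpa using this
      have : (a, b) = m := Prod.ext ha hmb.symm
      rw [this]; exact hmM
    obtain ⟨KA, hKAfi, -, hKA⟩ := hA ⊥ myFGbot a' (by simpa [Subgroup.mem_bot] using ha')
    set NA := KA.normalCore with hNA
    haveI : NA.FiniteIndex := Subgroup.finiteIndex_normalCore KA
    have ha'NA : a' ∉ NA := fun h => hKA (KA.normalCore_le h)
    -- work in Q × B with Q = A ⧸ NA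
    set Q := A ⧸ NA with hQ
    set φ : A × B →* Q × B := (QuotientGroup.mk' NA).prodMap (MonoidHom.id B) with hφ
    set L := M.map φ with hL
    have htrivL : ∀ x : Q, (x, (1 : B)) ∈ L → x = 1 := by
      rintro x ⟨⟨c, d⟩, hcd, heq⟩
      have hd : d = 1 := congrArg Prod.snd heq
      have hc : (QuotientGroup.mk' NA) c = x := congrArg Prod.fst heq
      subst hd
      have : c ∈ M.comap (MonoidHom.inl A B) := by
        simpa [MonoidHom.inl] using hcd
      rw [htriv, Subgroup.mem_bot] at this
      rw [← hc, this]; simp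
    obtain ⟨K, hKfi, hKsep⟩ := sepLemma hB L (myFGmap hM φ) htrivL
    set NB := K.normalCore with hNB
    haveI : NB.FiniteIndex := Subgroup.finiteIndex_normalCore K
    refine ⟨NA.prod NB, inferInstance, ?_, ?_⟩
    · constructor
      rw [Subgroup.index_prod]
      exact mul_ne_zero Subgroup.FiniteIndex.index_ne_zero Subgroup.FiniteIndex.index_ne_zero
    · rintro k hk n hn heq
      have hk' : k * m⁻¹ ∈ M := mul_mem hk (inv_mem hmM)
      have hn' : m * n * m⁻¹ ∈ NA.prod NB :=
        Subgroup.Normal.conj_mem inferInstance n hn m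
      set k' := k * m⁻¹ with hk'def
      set n' := m * n * m⁻¹ with hn'def
      have heq2 : (a', (1 : B)) = k' * n' := by
        have : (a, b) * m⁻¹ = k * n * m⁻¹ := by rw [heq]
        have hleft : (a, b) * m⁻¹ = (a', b * m.2⁻¹) := rfl
        have hb1 : b * m.2⁻¹ = 1 := by rw [← hmb]; simp
        rw [hleft, hb1] at this
        rw [this, hk'def, hn'def]; group
      have hn'1 : n'.1 ∈ NA := hn'.1
      have hn'2 : n'.2 ∈ NB := hn'.2
      have hsnd : (1 : B) = k'.2 * n'.2 := congrArg Prod.snd heq2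
      have hk'2 : k'.2 ∈ K := by
        have : k'.2 = n'.2⁻¹ := by
          rw [eq_inv_iff_mul_eq_one]; exact hsnd.symm
        rw [this]
        exact K.normalCore_le (inv_mem hn'2)
      have hφk' : ((QuotientGroup.mk' NA) k'.1, k'.2) ∈ L := ⟨k', hk', rfl⟩
      have hx1 : (QuotientGroup.mk' NA) k'.1 = 1 := hKsep _ _ hφk' hk'2
      have hk'1 : k'.1 ∈ NA := (QuotientGroup.eq_one_iff _).mp hx1
      have hfst : a' = k'.1 * n'.1 := congrArg Prod.fst heq2
      exact ha'NA (hfst ▸ mul_mem hk'1 hn'1)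
  · -- b not in the projection of M
    obtain ⟨K, hKfi, hPK, hbK⟩ := hB P (myFGmap hM _) b hb
    haveI : K.normalCore.FiniteIndex := Subgroup.finiteIndex_normalCore K
    refine ⟨(⊤ : Subgroup A).prod K.normalCore, inferInstance, ?_, ?_⟩
    · constructor
      rw [Subgroup.index_prod, Subgroup.index_top, one_mul]
      exact Subgroup.FiniteIndex.index_ne_zero
    · rintro k hk n hn heq
      apply hbK
      have hsnd : b = k.2 * n.2 := congrArg Prod.snd heq
      have hk2 : k.2 ∈ K := hPK ⟨k, hk, rfl⟩
      have hn2 : n.2 ∈ K := K.normalCore_le hn.2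
      rw [hsnd]
      exact mul_mem hk2 hn2
end
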